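/- Let p be an odd prime, l ≥ 1, and suppose ψ_n(x) = x^n is ergodic on the sphere S_{p^{-l}}(1) with respect to the normalized Haar measure. Then ψ_n is not weakly mixing: the product system ψ_n × ψ_n on S_{p^{-l}}(1) × S_{p^{-l}}(1) is not ergodic, because F(x,y) = log x / log y is a non-constant measurable invariant function, satisfying F(x^n, y^n) = F(x,y). -/

import Mathlib

open MeasureTheory

/-- The p-adic logarithm, defined by its power series
`log(1+λ) = ∑_{k≥1} (-1)^{k+1} λ^k / k`. -/
noncomputable def plog {p : ℕ} [Fact p.Prime] (x : ℚ_[p]) : ℚ_[p] :=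
  ∑' k : ℕ, (-1) ^ k * (x - 1) ^ (k + 1) / (k + 1)

/-!
Since `p ∤ n`, `x ↦ xⁿ` is an isometry of `1 + pℤ_p`: `xⁿ - yⁿ = (x - y) · ∑ xⁱ yⁿ⁻¹⁻ⁱ` and the
sum is `≡ n ≢ 0 (mod p)`. An isometry preserves the set `{(x, y) | d(x, y) ≤ p^(-l-1)}`, whose
product measure is `1/(p - 1) ∉ {0, 1}` by Fubini, so `ψ × ψ` is not ergodic.

The identity `log(xⁿ) = n log x` is the formal identity `log((1 + X)ⁿ) = n log(1 + X)`
(compare derivatives) evaluated at `x - 1`: the double series obtained by expanding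
`∑ₖ ±((1 + u)ⁿ - 1)ᵏ / k` in powers of `u` converges absolutely for `‖u‖ < 1`, because
`‖1/k‖ ≤ k` and all other coefficients are integers, so it may be summed in either order.
-/

open scoped ENNReal
open PowerSeries Finset

section IsometryProduct

theorem Isometry.preimage_prodMap_setOf_dist_le {X : Type*} [PseudoMetricSpace X] {T : X → X}
    (hT : Isometry T) (c : ℝ) :
    Prod.map T T ⁻¹' {z | dist z.1 z.2 ≤ c} = {z | dist z.1 z.2 ≤ c} := by
  ext z
  simp [hT.dist_eq]

variable {X : Type*} [PseudoMetricSpace X] [MeasurableSpace X] [OpensMeasurableSpace X]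
  [SecondCountableTopology X]

theorem measurableSet_setOf_dist_le (c : ℝ) : MeasurableSet {z : X × X | dist z.1 z.2 ≤ c} :=
  (continuous_fst.dist continuous_snd).measurable measurableSet_Iic

theorem MeasureTheory.Measure.prod_setOf_dist_le (μ : Measure X) [IsProbabilityMeasure μ]
    {c : ℝ} {m : ℝ≥0∞} (hball : ∀ a, μ {x | dist x a ≤ c} = m) :
    μ.prod μ {z | dist z.1 z.2 ≤ c} = m := by
  have hsection : ∀ a, Prod.mk a ⁻¹' {z : X × X | dist z.1 z.2 ≤ c} = {x | dist x a ≤ c} :=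
    fun a => Set.ext fun x => by simp [dist_comm]
  simp [Measure.prod_apply (measurableSet_setOf_dist_le c), hsection, hball]

theorem Isometry.not_ergodic_prodMap {T : X → X} (hT : Isometry T) (μ : Measure X)
    [IsProbabilityMeasure μ] {c : ℝ} {m : ℝ≥0∞} (hball : ∀ a, μ {x | dist x a ≤ c} = m)
    (h0 : m ≠ 0) (h1 : m ≠ 1) : ¬ Ergodic (Prod.map T T) (μ.prod μ) := fun h => by
  have := h.toPreErgodic.prob_eq_zero_or_one (measurableSet_setOf_dist_le c)
    (hT.preimage_prodMap_setOf_dist_le c)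
  rw [μ.prod_setOf_dist_le hball] at this
  tauto

end IsometryProduct

namespace PadicInt

variable {p : ℕ} [Fact p.Prime]

theorem toZMod_eq_zero_iff {z : ℤ_[p]} : toZMod z = 0 ↔ ‖z‖ < 1 := by
  rw [← RingHom.mem_ker, ker_toZMod, IsLocalRing.mem_maximalIdeal, mem_nonunits]

theorem toZMod_eq_one_of_norm_sub_one_lt {x : ℤ_[p]} (hx : ‖x - 1‖ < 1) : toZMod x = 1 := by
  rwa [← sub_eq_zero, ← map_one toZMod, ← map_sub, toZMod_eq_zero_iff]

theorem norm_pow_sub_pow {x y : ℤ_[p]} (hx : ‖x - 1‖ < 1) (hy : ‖y - 1‖ < 1) {n : ℕ}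
    (hn : n.Coprime p) : ‖x ^ n - y ^ n‖ = ‖x - y‖ := by
  set S := ∑ i ∈ range n, x ^ i * y ^ (n - 1 - i)
  have hS : toZMod S = n := by
    simp [S, toZMod_eq_one_of_norm_sub_one_lt hx, toZMod_eq_one_of_norm_sub_one_lt hy]
  have hS1 : ‖S‖ = 1 := by
    refine le_antisymm (norm_le_one S) (not_lt.1 fun h => ?_)
    rw [← toZMod_eq_zero_iff, hS, ZMod.natCast_eq_zero_iff] at h
    exact (Fact.out : p.Prime).one_lt.ne' (hn.symm.eq_one_of_dvd h)
  rw [← geom_sum₂_mul, norm_mul, hS1, one_mul]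

end PadicInt

namespace Polynomial

theorem coeff_pow_eq_zero_of_lt {R : Type*} [CommSemiring R] {g : Polynomial R}
    (hg : g.coeff 0 = 0) {d m : ℕ} (hm : m < d) : (g ^ d).coeff m = 0 :=
  X_pow_dvd_iff.1 (pow_dvd_pow_of_dvd (X_dvd_iff.2 hg) d) m hm

theorem coeff_coe_map_intCast_pow (g : Polynomial ℤ) (d m : ℕ) :
    PowerSeries.coeff m (((g.map (Int.castRingHom ℚ) : Polynomial ℚ) : ℚ⟦X⟧) ^ d) =
      (g ^ d).coeff m := by
  rw [← coe_pow, ← Polynomial.map_pow, coeff_coe, coeff_map, eq_intCast]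

end Polynomial

namespace PowerSeries

theorem coeff_pow_eq_zero_of_lt {R : Type*} [CommSemiring R] {G : R⟦X⟧}
    (hG : constantCoeff G = 0) {d m : ℕ} (hm : m < d) : coeff m (G ^ d) = 0 :=
  X_pow_dvd_iff.1 (pow_dvd_pow_of_dvd (X_dvd_iff.2 hG) d) m hm

theorem coeff_subst_eq_sum_range {R : Type*} [CommRing R] {G : R⟦X⟧}
    (hG : constantCoeff G = 0) (f : R⟦X⟧) (m : ℕ) :
    coeff m (f.subst G) = ∑ d ∈ range (m + 1), coeff d f * coeff m (G ^ d) := by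
  rw [coeff_subst' (HasSubst.of_constantCoeff_zero' hG)]
  refine finsum_eq_sum_of_support_subset _ fun d hd => ?_
  rw [coe_range, Set.mem_Iio]
  by_contra! hmd
  exact hd (by simp [coeff_pow_eq_zero_of_lt hG (by omega : m < d)])

theorem one_add_X_mul_derivative_log : (1 + X) * d⁄dX ℚ (log ℚ) = 1 := by
  ext n
  rw [deriv_log]
  rcases n with _ | n
  · simp
  · rw [add_mul, one_mul, map_add, coeff_succ_X_mul]; simp [pow_succ]

theorem logOf_one_add_X_pow (n : ℕ) :
    logOf ((1 + X : ℚ⟦X⟧) ^ n) = n * log ℚ := by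
  have hW : HasSubst ((1 + X : ℚ⟦X⟧) ^ n - 1) :=
    HasSubst.of_constantCoeff_zero' (by simp)
  have hinv : (1 + X) ^ n * (d⁄dX ℚ (log ℚ)).subst ((1 + X : ℚ⟦X⟧) ^ n - 1) = 1 := by
    simpa only [map_mul, map_add, map_one, coe_substAlgHom, subst_X hW, add_sub_cancel] using
      congrArg (substAlgHom hW) one_add_X_mul_derivative_log
  have hunit : IsUnit ((1 + X : ℚ⟦X⟧) ^ n) := (isUnit_iff_constantCoeff.2 (by simp)).pow n
  apply derivative.ext
  · rw [logOf_eq, derivative_subst hW]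
    refine hunit.mul_left_cancel ?_
    rw [← mul_assoc, hinv, one_mul, map_sub, derivative_one, sub_zero, derivative_pow,
      map_add, derivative_one, derivative_X, zero_add, mul_one]
    rcases n with _ | n
    · simp
    · rw [Derivation.leibniz, Derivation.map_natCast, smul_zero, add_zero, smul_eq_mul,
        add_tsub_cancel_right]
      linear_combination (-↑(n + 1) * (1 + X : ℚ⟦X⟧) ^ n) * one_add_X_mul_derivative_log
  · simp [constantCoeff_logOf]

end PowerSeries

section PadicLog

variable {p : ℕ} [Fact p.Prime]

theorem Padic.summable_coeff_mul_coeff_pow_mul_pow {f : ℚ⟦X⟧}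
    (hf : ∀ d, ‖((coeff d f : ℚ) : ℚ_[p])‖ ≤ d) {g : Polynomial ℤ} (hg : g.coeff 0 = 0)
    {u : ℚ_[p]} (hu : ‖u‖ < 1) :
    Summable fun q : ℕ × ℕ =>
      ((coeff q.1 f : ℚ) : ℚ_[p]) * ((g ^ q.1).coeff q.2 : ℚ_[p]) * u ^ q.2 := by
  -- `s = √‖u‖` shares the decay of `‖u‖ ^ m` between both indices: the `(d, m)` term
  -- vanishes unless `d ≤ m`
  set s := √‖u‖
  have hs0 : 0 ≤ s := Real.sqrt_nonneg _
  have hs1 : s < 1 := (Real.sqrt_lt' one_pos).2 (by simpa using hu)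
  refine Summable.of_norm_bounded (g := fun q : ℕ × ℕ => q.1 * s ^ q.1 * s ^ q.2) ?_ ?_
  · refine Summable.mul_of_nonneg (f := fun d : ℕ => d * s ^ d) ?_
      (summable_geometric_of_lt_one hs0 hs1) (fun _ => by positivity) (fun _ => by positivity)
    simpa using summable_pow_mul_geometric_of_norm_lt_one 1
      (by rwa [Real.norm_of_nonneg hs0] : ‖s‖ < 1)
  rintro ⟨d, m⟩
  rcases lt_or_ge m d with hmd | hdm
  · simp only [Polynomial.coeff_pow_eq_zero_of_lt hg hmd, Int.cast_zero, mul_zero, zero_mul,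
      norm_zero]
    positivity
  have hu' : ‖u‖ ^ m ≤ s ^ d * s ^ m := by
    rw [← Real.sq_sqrt (norm_nonneg u), ← pow_mul, two_mul, pow_add]
    exact mul_le_mul_of_nonneg_right (pow_le_pow_of_le_one hs0 hs1.le hdm) (by positivity)
  calc ‖((coeff d f : ℚ) : ℚ_[p]) * ((g ^ d).coeff m : ℚ_[p]) * u ^ m‖ ≤ d * 1 * ‖u‖ ^ m := by
        simp only [norm_mul, norm_pow]
        gcongr
        exacts [hf d, Padic.norm_int_le_one _]
    _ ≤ d * s ^ d * s ^ m := by rw [mul_one, mul_assoc]; gcongr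

theorem Padic.tsum_coeff_mul_aeval_pow {f : ℚ⟦X⟧} (hf : ∀ d, ‖((coeff d f : ℚ) : ℚ_[p])‖ ≤ d)
    {g : Polynomial ℤ} (hg : g.coeff 0 = 0) {u : ℚ_[p]} (hu : ‖u‖ < 1) :
    ∑' d, ((coeff d f : ℚ) : ℚ_[p]) * (Polynomial.aeval u g) ^ d =
      ∑' m, ((coeff m (f.subst (g.map (Int.castRingHom ℚ) : ℚ⟦X⟧)) : ℚ) : ℚ_[p]) * u ^ m := by
  set F : ℕ × ℕ → ℚ_[p] := fun q =>
    ((coeff q.1 f : ℚ) : ℚ_[p]) * ((g ^ q.1).coeff q.2 : ℚ_[p]) * u ^ q.2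
  have hrow : ∀ d, ∑' m, F (d, m) = ((coeff d f : ℚ) : ℚ_[p]) * (Polynomial.aeval u g) ^ d := by
    intro d
    rw [← map_pow, Polynomial.aeval_eq_sum_range, mul_sum]
    refine (tsum_eq_sum fun m hm => ?_).trans (sum_congr rfl fun m _ => ?_)
    · rw [mem_range, not_lt] at hm
      simp [F, Polynomial.coeff_eq_zero_of_natDegree_lt hm]
    · simp [F, zsmul_eq_mul, mul_assoc]
  have hG : constantCoeff ((g.map (Int.castRingHom ℚ) : Polynomial ℚ) : ℚ⟦X⟧) = 0 := by
    rw [Polynomial.constantCoeff_coe, Polynomial.coeff_map, hg, map_zero]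
  have hcol : ∀ m, ∑' d, F (d, m) =
      ((coeff m (f.subst (g.map (Int.castRingHom ℚ) : ℚ⟦X⟧)) : ℚ) : ℚ_[p]) * u ^ m := by
    intro m
    rw [coeff_subst_eq_sum_range hG, Rat.cast_sum, sum_mul]
    simp only [Polynomial.coeff_coe_map_intCast_pow]
    refine (tsum_eq_sum fun d hd => ?_).trans (sum_congr rfl fun d _ => ?_)
    · rw [mem_range, not_lt] at hd
      simp [F, Polynomial.coeff_pow_eq_zero_of_lt hg (by omega : m < d)]
    · simp [F]
  calc ∑' d, ((coeff d f : ℚ) : ℚ_[p]) * (Polynomial.aeval u g) ^ d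
      = ∑' d, ∑' m, F (d, m) := tsum_congr fun d => (hrow d).symm
    _ = ∑' m, ∑' d, F (d, m) :=
      ((Padic.summable_coeff_mul_coeff_pow_mul_pow hf hg hu).tsum_comm
        (f := fun d m => F (d, m))).symm
    _ = _ := tsum_congr hcol

theorem Padic.inv_natCast_le_norm {d : ℕ} (hd : d ≠ 0) : (d : ℝ)⁻¹ ≤ ‖(d : ℚ_[p])‖ := by
  have hp : (0 : ℝ) < p := by exact_mod_cast (Fact.out : p.Prime).pos
  rw [Padic.norm_eq_zpow_neg_valuation (Nat.cast_ne_zero.2 hd), Padic.valuation_natCast,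
    zpow_neg, zpow_natCast]
  gcongr
  exact_mod_cast Nat.le_of_dvd (Nat.pos_of_ne_zero hd) pow_padicValNat_dvd

theorem Padic.norm_coeff_log_le (d : ℕ) : ‖((coeff d (log ℚ) : ℚ) : ℚ_[p])‖ ≤ d := by
  rcases eq_or_ne d 0 with rfl | hd
  · simp
  · simp only [coeff_log, if_neg hd, Algebra.algebraMap_self, RingHom.id_apply, Rat.cast_div,
      norm_div, Rat.cast_pow, norm_pow, Rat.cast_neg, Rat.cast_one, norm_neg, norm_one, one_pow,
      Rat.cast_natCast, one_div]
    rw [inv_le_comm₀ (norm_pos_iff.2 (Nat.cast_ne_zero.2 hd)) (by positivity)]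
    exact Padic.inv_natCast_le_norm hd

theorem plog_eq_tsum_coeff_log (x : ℚ_[p]) :
    plog x = ∑' d, ((coeff d (log ℚ) : ℚ) : ℚ_[p]) * (x - 1) ^ d := by
  rw [plog, ← Nat.succ_injective.tsum_eq
    (f := fun d => ((coeff d (log ℚ) : ℚ) : ℚ_[p]) * (x - 1) ^ d) fun d hd => ?_]
  · refine tsum_congr fun k => ?_
    simp only [coeff_log, Nat.succ_ne_zero, if_false, Nat.succ_eq_add_one]
    push_cast
    ring
  · rcases d with _ | d
    · simp at hd
    · exact ⟨d, rfl⟩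

theorem plog_pow {x : ℚ_[p]} (hx : ‖x - 1‖ < 1) (n : ℕ) : plog (x ^ n) = n * plog x := by
  have key := Padic.tsum_coeff_mul_aeval_pow Padic.norm_coeff_log_le
    (g := (1 + Polynomial.X) ^ n - 1) (by simp [Polynomial.coeff_zero_eq_eval_zero]) hx
  have hsubst : (log ℚ).subst ((((1 + Polynomial.X : Polynomial ℤ) ^ n - 1).map
      (Int.castRingHom ℚ) : Polynomial ℚ) : ℚ⟦X⟧) = n * log ℚ := by
    rw [← logOf_one_add_X_pow, logOf_eq]
    simp
  rw [hsubst] at key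
  simp only [map_sub, map_pow, map_add, map_one, Polynomial.aeval_X, add_sub_cancel] at key
  rw [plog_eq_tsum_coeff_log, key, plog_eq_tsum_coeff_log, ← tsum_mul_left]
  refine tsum_congr fun m => ?_
  rw [← map_natCast (C (R := ℚ)), coeff_C_mul]
  push_cast
  ring

end PadicLog

theorem stmt_19_general (p : ℕ) [Fact p.Prime] (hp : p ≠ 2) (l : ℕ) (hl : 1 ≤ l)
    (n : ℕ) (hn : n.Coprime p)
    [MeasurableSpace ℤ_[p]] [BorelSpace ℤ_[p]]
    (ψ : {x : ℤ_[p] // ‖x - 1‖ = (p : ℝ) ^ (-(l : ℤ))} →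
         {x : ℤ_[p] // ‖x - 1‖ = (p : ℝ) ^ (-(l : ℤ))})
    (hψ : ∀ x : {x : ℤ_[p] // ‖x - 1‖ = (p : ℝ) ^ (-(l : ℤ))},
      (ψ x : ℤ_[p]) = (x : ℤ_[p]) ^ n)
    (μ : Measure {x : ℤ_[p] // ‖x - 1‖ = (p : ℝ) ^ (-(l : ℤ))})
    (hprob : IsProbabilityMeasure μ)
    (hHaar : ∀ k : ℕ, 1 ≤ k → ∀ a : {x : ℤ_[p] // ‖x - 1‖ = (p : ℝ) ^ (-(l : ℤ))},
      μ {x | dist x a ≤ (p : ℝ) ^ (-(l + k : ℤ))}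
        = (((p - 1) * p ^ (k - 1) : ℕ) : ENNReal)⁻¹) :
    ¬ Ergodic (Prod.map ψ ψ) (μ.prod μ) ∧
    (∀ x y : {x : ℤ_[p] // ‖x - 1‖ = (p : ℝ) ^ (-(l : ℤ))},
      plog (((x : ℤ_[p]) : ℚ_[p]) ^ n) / plog (((y : ℤ_[p]) : ℚ_[p]) ^ n)
        = plog ((x : ℤ_[p]) : ℚ_[p]) / plog ((y : ℤ_[p]) : ℚ_[p])) := by
  have hp1 : (1 : ℝ) < p := by exact_mod_cast (Fact.out : p.Prime).one_lt
  have hsphere : ∀ x : {x : ℤ_[p] // ‖x - 1‖ = (p : ℝ) ^ (-(l : ℤ))}, ‖(x : ℤ_[p]) - 1‖ < 1 :=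
    fun x => by rw [x.2]; exact zpow_lt_one_of_neg₀ hp1 (by omega)
  have hψ_isometry : Isometry ψ := Isometry.of_dist_eq fun x y => by
    rw [Subtype.dist_eq, Subtype.dist_eq, dist_eq_norm, dist_eq_norm, hψ, hψ,
      PadicInt.norm_pow_sub_pow (hsphere x) (hsphere y) hn]
  have hn0 : (n : ℚ_[p]) ≠ 0 := Nat.cast_ne_zero.2 <| by
    rintro rfl
    exact hp1.ne' (by exact_mod_cast (Nat.coprime_zero_left p).1 hn)
  refine ⟨hψ_isometry.not_ergodic_prodMap μ (hHaar 1 le_rfl) ?_ ?_, fun x y => ?_⟩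
  · exact ENNReal.inv_ne_zero.2 (ENNReal.natCast_ne_top _)
  · have := (Fact.out : p.Prime).two_le
    rw [Ne, ENNReal.inv_eq_one, Nat.cast_eq_one, pow_zero, mul_one]
    omega
  · have hlog : ∀ z : {x : ℤ_[p] // ‖x - 1‖ = (p : ℝ) ^ (-(l : ℤ))},
        plog (((z : ℤ_[p]) : ℚ_[p]) ^ n) = n * plog ((z : ℤ_[p]) : ℚ_[p]) := fun z =>
      plog_pow (by simpa [PadicInt.norm_def] using hsphere z) n
    rw [hlog, hlog, mul_div_mul_left _ _ hn0]

theorem stmt_19 (p : ℕ) [Fact p.Prime] (hp : p ≠ 2) (l : ℕ) (hl : 1 ≤ l)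
    (n : ℕ) (hn : n.Coprime p)
    [MeasurableSpace ℤ_[p]] [BorelSpace ℤ_[p]]
    (ψ : {x : ℤ_[p] // ‖x - 1‖ = (p : ℝ) ^ (-(l : ℤ))} →
         {x : ℤ_[p] // ‖x - 1‖ = (p : ℝ) ^ (-(l : ℤ))})
    (hψ : ∀ x : {x : ℤ_[p] // ‖x - 1‖ = (p : ℝ) ^ (-(l : ℤ))},
      (ψ x : ℤ_[p]) = (x : ℤ_[p]) ^ n)
    (μ : Measure {x : ℤ_[p] // ‖x - 1‖ = (p : ℝ) ^ (-(l : ℤ))})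
    (hprob : IsProbabilityMeasure μ)
    (hHaar : ∀ k : ℕ, 1 ≤ k → ∀ a : {x : ℤ_[p] // ‖x - 1‖ = (p : ℝ) ^ (-(l : ℤ))},
      μ {x | dist x a ≤ (p : ℝ) ^ (-(l + k : ℤ))}
        = (((p - 1) * p ^ (k - 1) : ℕ) : ENNReal)⁻¹)
    (herg : Ergodic ψ μ) :
    ¬ Ergodic (Prod.map ψ ψ) (μ.prod μ) ∧
    (∀ x y : {x : ℤ_[p] // ‖x - 1‖ = (p : ℝ) ^ (-(l : ℤ))},
      plog (((x : ℤ_[p]) : ℚ_[p]) ^ n) / plog (((y : ℤ_[p]) : ℚ_[p]) ^ n)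
        = plog ((x : ℤ_[p]) : ℚ_[p]) / plog ((y : ℤ_[p]) : ℚ_[p])) :=
  stmt_19_general p hp l hl n hn ψ hψ μ hprob hHaar
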